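/- arXiv:1503.00665 — 2 statements merged into one kernel-verified Lean document; each statement's English description precedes it below -/
import Mathlib

section
/- Let R be a ring, N a natural number, and C = ⊕_{i=0}^{N} C_i a graded R-module concentrated in the finitely many degrees 0, …, N. Let d : C → C be an R-linear map with d ∘ d = 0 that strictly increases degree (for j ≤ i, the composite π_j ∘ d ∘ ι_i is zero), and let d₁ be its degree-1 homogeneous component (so that d₁ ∘ d₁ = 0). If the complex (C, d₁) is acyclic, i.e. ker d₁ = range d₁, then (C, d) is acyclic: ker d = range d. -/
/-!
Filter `⨁ i, C i` by `F k`, the elements vanishing in degrees `< k`; `d` maps `F k` into `F (k + 1)`.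
A `d`-cycle `x ∈ F k` has a lowest-degree part `x_k` that is a `d₁`-cycle, hence a `d₁`-boundary
`d₁ z`; then `x - d z_{k-1} ∈ F (k + 1)` (for `k = 0`, already `x_0 = 0`). Since `F (N + 1) = 0`,
after finitely many such corrections a cycle becomes `0`, so it was a `d`-boundary.
-/

open DirectSum

section DegreeFiltration

variable (R : Type*) [Ring R] (C : ℕ → Type*) [∀ i, AddCommGroup (C i)] [∀ i, Module R (C i)]

def degreeFiltration (k : ℕ) : Submodule R (⨁ i, C i) where
  carrier := {x | ∀ j < k, x j = 0}
  add_mem' hx hy j hj := by simp [hx j hj, hy j hj]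
  zero_mem' _ _ := rfl
  smul_mem' c x hx j hj := by rw [DFinsupp.smul_apply, hx j hj, smul_zero]

variable {R C}

theorem degreeFiltration_antitone : Antitone (degreeFiltration R C) :=
  fun _ _ hkl _ hx j hj => hx j (lt_of_lt_of_le hj hkl)

theorem degreeFiltration_zero : degreeFiltration R C 0 = ⊤ :=
  eq_top_iff.mpr fun _ _ j hj => absurd hj j.not_lt_zero

theorem degreeFiltration_succ_eq_bot {N : ℕ} (hbdd : ∀ i, N < i → Subsingleton (C i)) :
    degreeFiltration R C (N + 1) = ⊥ := by
  refine eq_bot_iff.mpr fun x hx => (Submodule.mem_bot R).mpr (DFinsupp.ext fun j => ?_)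
  rcases le_or_gt j N with hj | hj
  · exact hx j (Nat.lt_succ_of_le hj)
  · exact (hbdd j hj).elim _ _

theorem sub_of_apply_mem_degreeFiltration_succ {k : ℕ} {x : ⨁ i, C i}
    (hx : x ∈ degreeFiltration R C k) : x - of C k (x k) ∈ degreeFiltration R C (k + 1) := by
  intro j hj
  rcases (Nat.lt_succ_iff_lt_or_eq.mp hj) with hj | rfl
  · simp [hx j hj, of_eq_of_ne _ _ _ hj.ne]
  · simp

theorem map_mem_degreeFiltration_succ {d : (⨁ i, C i) →ₗ[R] ⨁ i, C i}
    (hdeg : ∀ i (a : C i), d (of C i a) ∈ degreeFiltration R C (i + 1))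
    {k : ℕ} {x : ⨁ i, C i} (hx : x ∈ degreeFiltration R C k) :
    d x ∈ degreeFiltration R C (k + 1) := by
  classical
  rw [← sum_support_of x, map_sum]
  refine Submodule.sum_mem _ fun i hi => degreeFiltration_antitone ?_ (hdeg i (x i))
  by_contra! hik
  exact DFinsupp.mem_support_iff.mp hi (hx i (Nat.lt_succ_iff.mp hik))

end DegreeFiltration

section DegreeOneComponent

variable {R : Type*} [Ring R] {C : ℕ → Type*} [∀ i, AddCommGroup (C i)] [∀ i, Module R (C i)]
  {d d1 : (⨁ i, C i) →ₗ[R] ⨁ i, C i}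
  (hd1 : ∀ i (a : C i), d1 (of C i a) = of C (i + 1) (d (of C i a) (i + 1)))
include hd1

theorem d1_apply_zero (z : ⨁ i, C i) : d1 z 0 = 0 := by
  induction z using DirectSum.induction_on with
  | zero => simp
  | of i a => rw [hd1, of_eq_of_ne _ _ _ (Nat.succ_ne_zero i).symm]
  | add x y hx hy => simp [hx, hy]

theorem d1_apply_succ (k : ℕ) (z : ⨁ i, C i) : d1 z (k + 1) = d (of C k (z k)) (k + 1) := by
  induction z using DirectSum.induction_on with
  | zero => simp
  | of i a =>
    rcases eq_or_ne k i with rfl | hki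
    · rw [hd1, of_eq_same, of_eq_same]
    · rw [hd1, of_eq_of_ne _ _ _ (by omega), of_eq_of_ne _ _ _ hki, map_zero, map_zero,
        DirectSum.zero_apply]
  | add x y hx hy => simp [hx, hy]

variable (hdeg : ∀ i (a : C i), d (of C i a) ∈ degreeFiltration R C (i + 1))
include hdeg

theorem d1_of_apply_eq_zero {k : ℕ} {x : ⨁ i, C i} (hx : x ∈ degreeFiltration R C k)
    (hdx : d x = 0) : d1 (of C k (x k)) = 0 := by
  have hrest := map_mem_degreeFiltration_succ hdeg (sub_of_apply_mem_degreeFiltration_succ hx)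
  have hlead : d (of C k (x k)) (k + 1) = 0 := by
    have h := hrest (k + 1) (Nat.lt_succ_self _)
    rwa [map_sub, hdx, DirectSum.sub_apply, DirectSum.zero_apply, zero_sub, neg_eq_zero] at h
  rw [hd1, hlead, map_zero]

theorem exists_map_mem_degreeFiltration_apply_eq {k : ℕ} {a : C k}
    (ha : of C k a ∈ LinearMap.range d1) :
    ∃ w, d w ∈ degreeFiltration R C k ∧ d w k = a := by
  obtain ⟨z, hz⟩ := ha
  cases k with
  | zero =>
    refine ⟨0, by simp, ?_⟩
    simpa [hz] using (d1_apply_zero hd1 z).symm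
  | succ t =>
    refine ⟨of C t (z t), hdeg t (z t), ?_⟩
    rw [← d1_apply_succ hd1, hz, of_eq_same]

variable (hacyclic : LinearMap.ker d1 = LinearMap.range d1)
include hacyclic

theorem exists_sub_map_mem_degreeFiltration_succ {k : ℕ} {x : ⨁ i, C i}
    (hx : x ∈ degreeFiltration R C k) (hdx : d x = 0) :
    ∃ w, x - d w ∈ degreeFiltration R C (k + 1) := by
  have hlead : of C k (x k) ∈ LinearMap.range d1 :=
    hacyclic ▸ d1_of_apply_eq_zero hd1 hdeg hx hdx
  obtain ⟨w, hwk, hw⟩ := exists_map_mem_degreeFiltration_apply_eq hd1 hdeg hlead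
  refine ⟨w, fun j hj => ?_⟩
  rcases Nat.lt_succ_iff_lt_or_eq.mp hj with hj | rfl
  · rw [DirectSum.sub_apply, hx j hj, hwk j hj, sub_zero]
  · rw [DirectSum.sub_apply, hw, sub_self]

theorem mem_range_of_mem_degreeFiltration (hd : d.comp d = 0) {N : ℕ}
    (hbdd : ∀ i, N < i → Subsingleton (C i)) {k : ℕ} (hk : k ≤ N + 1) {x : ⨁ i, C i}
    (hx : x ∈ degreeFiltration R C k) (hdx : d x = 0) : x ∈ LinearMap.range d := by
  induction hk using Nat.decreasingInduction generalizing x with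
  | self =>
    rw [degreeFiltration_succ_eq_bot hbdd, Submodule.mem_bot] at hx
    exact hx ▸ Submodule.zero_mem _
  | of_succ k _ ih =>
    obtain ⟨w, hw⟩ := exists_sub_map_mem_degreeFiltration_succ hd1 hdeg hacyclic hx hdx
    have hcycle : d (x - d w) = 0 := by
      rw [map_sub, hdx, ← LinearMap.comp_apply, hd, LinearMap.zero_apply, sub_zero]
    obtain ⟨y, hy⟩ := ih hw hcycle
    exact ⟨y + w, by rw [map_add, hy, sub_add_cancel]⟩

end DegreeOneComponent

theorem stmt_5 (R : Type) [Ring R] (N : ℕ) (C : ℕ → Type)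
    [∀ i, AddCommGroup (C i)] [∀ i, Module R (C i)]
    (hbdd : ∀ i : ℕ, N < i → Subsingleton (C i))
    (d : (⨁ i, C i) →ₗ[R] ⨁ i, C i)
    (hd : d.comp d = 0)
    (hdeg : ∀ i j : ℕ, j ≤ i →
      (DirectSum.component R ℕ C j).comp (d.comp (DirectSum.lof R ℕ C i)) = 0)
    (d1 : (⨁ i, C i) →ₗ[R] ⨁ i, C i)
    (hd1 : ∀ (i : ℕ) (x : C i),
      d1 (DirectSum.lof R ℕ C i x) =
        DirectSum.lof R ℕ C (i + 1)
          (DirectSum.component R ℕ C (i + 1) (d (DirectSum.lof R ℕ C i x))))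
    (hacyclic : LinearMap.ker d1 = LinearMap.range d1) :
    LinearMap.ker d = LinearMap.range d := by
  have hdeg' : ∀ i (a : C i), d (of C i a) ∈ degreeFiltration R C (i + 1) :=
    fun i a j hj => LinearMap.congr_fun (hdeg i j (Nat.lt_succ_iff.mp hj)) a
  refine le_antisymm (fun x hx => ?_) (LinearMap.range_le_ker_iff.mpr hd)
  have hx0 : x ∈ degreeFiltration R C 0 := by
    rw [degreeFiltration_zero]; exact Submodule.mem_top
  -- `lof` and `component` are definitionally `of` and evaluation, so `hd1` is accepted as is.
  exact mem_range_of_mem_degreeFiltration hd1 hdeg' hacyclic hd hbdd (Nat.zero_le _) hx0 hx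
end

section
/- Let C = ⊕_{i=0}^{N} C_i be a graded 𝔽₂-vector space concentrated in the finitely many degrees 0, …, N (where 𝔽₂ = ZMod 2), let D : C → C be a linear map with D ∘ D = 0 that strictly increases degree, and let C′ ⊆ C be a graded subspace with D(C′) ⊆ C′. Let D₁ be the degree-1 homogeneous component of D; note D₁(C′) ⊆ C′. If the restriction of D₁ to C′ is acyclic, i.e. ker(D₁) ∩ C′ = D₁(C′), then the quotient map q : C → C/C′ induces an isomorphism on homology: ker D / range D ≅ ker D̄ / range D̄, where D̄ is the endomorphism of C/C′ induced by D. -/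
/-!
Filter by degree. Since `D` strictly raises degree, the lowest nonzero component `c_k` of a
`D`-cycle `c ∈ C'` is a `D₁`-cycle, so `c_k = D₁ a` with `a ∈ C'`; subtracting `D a_{k-1}`, which
lies in `C'`, removes `c_k`. The grading is bounded, so after finitely many steps `c` is a
boundary in `C'`: the subcomplex `(C', D)` is acyclic. The long exact homology sequence of
`0 → C' → C → C/C' → 0` then shows that the quotient map is a quasi-isomorphism.
-/

open DirectSum

namespace LinearMap

variable {R M N : Type*} [Ring R] [AddCommGroup M] [Module R M] [AddCommGroup N] [Module R N]

abbrev homology (D : M →ₗ[R] M) : Type _ :=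
  ker D ⧸ (range D).comap (ker D).subtype

def homologyMap (f : M →ₗ[R] N) {D : M →ₗ[R] M} {D' : N →ₗ[R] N} (h : D' ∘ₗ f = f ∘ₗ D) :
    D.homology →ₗ[R] D'.homology :=
  Submodule.mapQ _ _
    (f.restrict fun x hx => by rw [mem_ker, ← comp_apply, h, comp_apply, mem_ker.mp hx, map_zero])
    (by
      rintro x ⟨y, hy⟩
      refine ⟨f y, ?_⟩
      change D' (f y) = f (D.ker.subtype x)
      rw [← hy]
      exact DFunLike.congr_fun h y)

theorem homologyMap_mk (f : M →ₗ[R] N) {D : M →ₗ[R] M} {D' : N →ₗ[R] N} (h : D' ∘ₗ f = f ∘ₗ D)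
    {x : ker D} {y : ker D'} (hxy : f x = y) :
    homologyMap f h (Submodule.Quotient.mk x) = Submodule.Quotient.mk y := by
  rw [homologyMap, Submodule.mapQ_apply]
  exact congrArg _ (Subtype.ext hxy)

theorem homologyMap_mkQ_bijective {D : M →ₗ[R] M} (hD2 : D ∘ₗ D = 0) {C' : Submodule R M}
    (hacyc : ker D ⊓ C' ≤ C'.map D) {Dbar : (M ⧸ C') →ₗ[R] M ⧸ C'}
    (h : Dbar ∘ₗ C'.mkQ = C'.mkQ ∘ₗ D) :
    Function.Bijective (homologyMap C'.mkQ h) := by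
  have hDD (z : M) : D (D z) = 0 := congr($hD2 z)
  have hDbar (z : M) : Dbar (C'.mkQ z) = C'.mkQ (D z) := congr($h z)
  constructor
  · rw [injective_iff_map_eq_zero]
    intro xq hx
    obtain ⟨x, rfl⟩ := Submodule.Quotient.mk_surjective _ xq
    rw [homologyMap, Submodule.mapQ_apply, Submodule.Quotient.mk_eq_zero] at hx
    obtain ⟨zbar, hz⟩ := hx
    obtain ⟨z, rfl⟩ := C'.mkQ_surjective zbar
    have hxz : (x : M) - D z ∈ C' := by
      rw [← Submodule.Quotient.mk_eq_zero, Submodule.Quotient.mk_sub, ← Submodule.mkQ_apply,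
        ← Submodule.mkQ_apply, ← hDbar, hz]
      exact sub_self _
    obtain ⟨b, -, hb⟩ := hacyc ⟨by simp [mem_ker.mp x.2, hDD], hxz⟩
    refine (Submodule.Quotient.mk_eq_zero _).mpr ⟨z + b, ?_⟩
    rw [map_add, hb, add_sub_cancel]
    rfl
  · intro yq
    obtain ⟨y, rfl⟩ := Submodule.Quotient.mk_surjective _ yq
    obtain ⟨w, hw⟩ := C'.mkQ_surjective y
    have hDw : D w ∈ C' := by
      rw [← Submodule.Quotient.mk_eq_zero, ← Submodule.mkQ_apply, ← hDbar, hw, ← mem_ker]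
      exact y.2
    obtain ⟨b, hbC, hb⟩ := hacyc ⟨hDD w, hDw⟩
    refine ⟨Submodule.Quotient.mk ⟨w - b, by rw [mem_ker, map_sub, hb, sub_self]⟩,
      homologyMap_mk C'.mkQ h ?_⟩
    rw [map_sub, hw, Submodule.mkQ_apply, (Submodule.Quotient.mk_eq_zero C').mpr hbC, sub_zero]

end LinearMap

namespace DirectSum

variable {R : Type*} [Ring R] {C : ℕ → Type*} [∀ i, AddCommGroup (C i)] [∀ i, Module R (C i)]
  {D D1 : (⨁ i, C i) →ₗ[R] ⨁ i, C i} {C' : Submodule R (⨁ i, C i)}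
  (hdeg : ∀ i j, j ≤ i → ∀ x : C i, component R ℕ C j (D (lof R ℕ C i x)) = 0)
  (hD1 : ∀ (i : ℕ) (x : C i),
    D1 (lof R ℕ C i x) = lof R ℕ C (i + 1) (component R ℕ C (i + 1) (D (lof R ℕ C i x))))
  (hgr : ∀ x ∈ C', ∀ i, lof R ℕ C i (component R ℕ C i x) ∈ C')
  (hacyc : LinearMap.ker D1 ⊓ C' ≤ C'.map D1)

include hdeg in
theorem component_map_eq_zero_of_forall_lt {x : ⨁ i, C i} {j : ℕ}
    (hx : ∀ i < j, component R ℕ C i x = 0) : component R ℕ C j (D x) = 0 := by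
  classical
  rw [← sum_support_of x, map_sum, map_sum]
  refine Finset.sum_eq_zero fun i hi => ?_
  have hij : j ≤ i := not_lt.mp fun h => DFinsupp.mem_support_iff.mp hi (hx i h)
  exact hdeg i j hij (x i)

include hdeg in
theorem component_succ_map_eq_of_forall_lt {x : ⨁ i, C i} {k : ℕ}
    (hx : ∀ i < k, component R ℕ C i x = 0) :
    component R ℕ C (k + 1) (D x) =
      component R ℕ C (k + 1) (D (lof R ℕ C k (component R ℕ C k x))) := by
  rw [← sub_eq_zero, ← map_sub, ← map_sub]
  refine component_map_eq_zero_of_forall_lt hdeg fun i hi => ?_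
  rcases (Nat.lt_succ_iff.mp hi).eq_or_lt with rfl | hik
  · rw [map_sub, component.lof_self, sub_self]
  · rw [map_sub, hx i hik, component.of, dif_neg hik.ne', sub_zero]

include hD1 in
theorem component_zero_degreeOnePart (b : ⨁ i, C i) : component R ℕ C 0 (D1 b) = 0 := by
  suffices component R ℕ C 0 ∘ₗ D1 = 0 from congr($this b)
  refine linearMap_ext R fun i => LinearMap.ext fun x => ?_
  simp only [LinearMap.comp_apply, hD1, LinearMap.zero_apply]
  rw [component.of, dif_neg (Nat.succ_ne_zero i)]

include hD1 in
theorem component_succ_degreeOnePart (b : ⨁ i, C i) (j : ℕ) :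
    component R ℕ C (j + 1) (D1 b) =
      component R ℕ C (j + 1) (D (lof R ℕ C j (component R ℕ C j b))) := by
  suffices component R ℕ C (j + 1) ∘ₗ D1 =
      component R ℕ C (j + 1) ∘ₗ D ∘ₗ lof R ℕ C j ∘ₗ component R ℕ C j from congr($this b)
  refine linearMap_ext R fun i => LinearMap.ext fun x => ?_
  simp only [LinearMap.comp_apply, hD1]
  rcases eq_or_ne i j with rfl | hij
  · rw [component.lof_self, component.lof_self]
  · rw [component.of, dif_neg (by omega), component.of, dif_neg hij, map_zero, map_zero,
      map_zero]

include hdeg hD1 hgr hacyc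

theorem exists_mem_forall_lt_succ_component_sub_map_eq_zero {c : ⨁ i, C i} (hc : c ∈ C')
    (hDc : D c = 0) {k : ℕ} (hck : ∀ i < k, component R ℕ C i c = 0) :
    ∃ b ∈ C', ∀ i < k + 1, component R ℕ C i (c - D b) = 0 := by
  have hD1ck : D1 (lof R ℕ C k (component R ℕ C k c)) = 0 := by
    rw [hD1, ← component_succ_map_eq_of_forall_lt hdeg hck, hDc, map_zero, map_zero]
  obtain ⟨a, haC, ha⟩ := hacyc ⟨hD1ck, hgr c hc k⟩
  have hak : component R ℕ C k (D1 a) = component R ℕ C k c := by rw [ha, component.lof_self]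
  cases k with
  | zero =>
    refine ⟨0, C'.zero_mem, fun i hi => ?_⟩
    rw [Nat.lt_one_iff.mp hi, map_zero, sub_zero, ← hak, component_zero_degreeOnePart hD1]
  | succ j =>
    refine ⟨lof R ℕ C j (component R ℕ C j a), hgr a haC j, fun i hi => ?_⟩
    rcases (Nat.lt_succ_iff.mp hi).eq_or_lt with rfl | hij
    · rw [map_sub, ← component_succ_degreeOnePart hD1, hak, sub_self]
    · rw [map_sub, hck i hij, hdeg j i (by omega), sub_zero]

theorem exists_mem_forall_lt_component_sub_map_eq_zero (hD2 : D ∘ₗ D = 0)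
    (hDC' : ∀ x ∈ C', D x ∈ C') {c : ⨁ i, C i} (hc : c ∈ C') (hDc : D c = 0) (k : ℕ) :
    ∃ b ∈ C', ∀ i < k, component R ℕ C i (c - D b) = 0 := by
  induction k with
  | zero => exact ⟨0, C'.zero_mem, fun i hi => absurd hi (Nat.not_lt_zero i)⟩
  | succ k ih =>
    obtain ⟨b, hbC, hb⟩ := ih
    have hDDb : D (D b) = 0 := congr($hD2 b)
    obtain ⟨b', hb'C, hb'⟩ := exists_mem_forall_lt_succ_component_sub_map_eq_zero hdeg hD1 hgr
      hacyc (C'.sub_mem hc (hDC' b hbC)) (by rw [map_sub, hDc, hDDb, sub_zero]) hb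
    exact ⟨b + b', C'.add_mem hbC hb'C, by simpa only [map_add, sub_add_eq_sub_sub] using hb'⟩

theorem ker_inf_le_map_of_ker_degreeOnePart_inf_le_map {N : ℕ}
    (hbdd : ∀ i, N < i → Subsingleton (C i)) (hD2 : D ∘ₗ D = 0) (hDC' : ∀ x ∈ C', D x ∈ C') :
    LinearMap.ker D ⊓ C' ≤ C'.map D := by
  rintro c ⟨hDc, hc⟩
  obtain ⟨b, hbC, hb⟩ :=
    exists_mem_forall_lt_component_sub_map_eq_zero hdeg hD1 hgr hacyc hD2 hDC' hc hDc (N + 1)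
  refine ⟨b, hbC, (sub_eq_zero.mp (ext_component R fun i => ?_)).symm⟩
  rcases lt_or_ge i (N + 1) with hi | hi
  · rw [hb i hi, map_zero]
  · have := hbdd i (by omega)
    exact Subsingleton.elim _ _

end DirectSum

theorem stmt_8 (N : ℕ) (C : ℕ → Type)
    [∀ i, AddCommGroup (C i)] [∀ i, Module (ZMod 2) (C i)]
    (hbdd : ∀ i : ℕ, N < i → Subsingleton (C i))
    (D : (⨁ i, C i) →ₗ[ZMod 2] ⨁ i, C i)
    (hD2 : D.comp D = 0)
    (hdeg : ∀ i j : ℕ, j ≤ i →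
      (DirectSum.component (ZMod 2) ℕ C j).comp
        (D.comp (DirectSum.lof (ZMod 2) ℕ C i)) = 0)
    (C' : Submodule (ZMod 2) (⨁ i, C i))
    (hgr : ∀ x ∈ C', ∀ i : ℕ,
      DirectSum.lof (ZMod 2) ℕ C i (DirectSum.component (ZMod 2) ℕ C i x) ∈ C')
    (hDC' : ∀ x ∈ C', D x ∈ C')
    (D1 : (⨁ i, C i) →ₗ[ZMod 2] ⨁ i, C i)
    (hD1 : ∀ (i : ℕ) (x : C i),
      D1 (DirectSum.lof (ZMod 2) ℕ C i x) =
        DirectSum.lof (ZMod 2) ℕ C (i + 1)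
          (DirectSum.component (ZMod 2) ℕ C (i + 1) (D (DirectSum.lof (ZMod 2) ℕ C i x))))
    (hacyc : LinearMap.ker D1 ⊓ C' = Submodule.map D1 C') :
    ∀ Dbar : ((⨁ i, C i) ⧸ C') →ₗ[ZMod 2] ((⨁ i, C i) ⧸ C'),
      Dbar.comp C'.mkQ = C'.mkQ.comp D →
      ∃ φ : ((LinearMap.ker D) ⧸
              (LinearMap.range D).comap (LinearMap.ker D).subtype) ≃ₗ[ZMod 2]
            ((LinearMap.ker Dbar) ⧸
              (LinearMap.range Dbar).comap (LinearMap.ker Dbar).subtype),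
        ∀ (x : LinearMap.ker D) (y : LinearMap.ker Dbar),
          C'.mkQ ↑x = ↑y →
          φ (Submodule.Quotient.mk x) = Submodule.Quotient.mk y := by
  intro Dbar hDbar
  have hdeg' : ∀ i j, j ≤ i → ∀ x : C i,
      component (ZMod 2) ℕ C j (D (lof (ZMod 2) ℕ C i x)) = 0 :=
    fun i j hij x => congr($(hdeg i j hij) x)
  have hacycD : LinearMap.ker D ⊓ C' ≤ C'.map D :=
    ker_inf_le_map_of_ker_degreeOnePart_inf_le_map hdeg' hD1 hgr hacyc.le hbdd hD2 hDC'
  exact ⟨.ofBijective _ (LinearMap.homologyMap_mkQ_bijective hD2 hacycD hDbar),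
    fun x y hxy => LinearMap.homologyMap_mk C'.mkQ hDbar hxy⟩
end
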